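/- Let G be a k-regular simple graph on n vertices with adjacency matrix A and distinct adjacency eigenvalues k = θ_0 > θ_1 > ⋯ > θ_d, where d ≥ 3. Set Δ_3 = max_{u ∈ V(G)} (A^3)_{uu}, and let θ_s be the largest eigenvalue such that θ_s ≤ − (θ_0^2 + θ_0·θ_d − Δ_3) / (θ_0·(θ_d + 1)). Then the distance-3 chromatic number satisfies χ_3(G) ≥ n / ⌊ n·(Δ_3 − θ_0(θ_s + θ_{s−1} + θ_d) − θ_s·θ_{s−1}·θ_d) / ((θ_0 − θ_s)(θ_0 − θ_{s−1})(θ_0 − θ_d)) ⌋. -/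

import Mathlib

open Finset Polynomial

/-- The `t`-th power graph: vertices are adjacent when they are distinct and at
graph (geodesic) distance at most `t` in `G`. -/
def powerGraph {V : Type*} (G : SimpleGraph V) (t : ℕ) : SimpleGraph V where
  Adj u v := u ≠ v ∧ G.Reachable u v ∧ G.dist u v ≤ t
  symm := ⟨by
    rintro u v ⟨h1, h2, h3⟩
    exact ⟨h1.symm, h2.symm, by rwa [SimpleGraph.dist_comm]⟩⟩
  loopless := ⟨fun v h => h.1 rfl⟩

/-- The distance-`t` chromatic number of a graph. -/
noncomputable def distChromaticNumber {V : Type*} (G : SimpleGraph V) (t : ℕ) : ℕ∞ :=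
  (powerGraph G t).chromaticNumber

/-- `x` is an eigenvalue of the (real) adjacency matrix of `G`. -/
def IsAdjEigenvalue {V : Type*} [Fintype V] [DecidableEq V] (G : SimpleGraph V)
    [DecidableRel G.Adj] (x : ℝ) : Prop :=
  ∃ v : V → ℝ, v ≠ 0 ∧ (SimpleGraph.adjMatrix ℝ G).mulVec v = x • v

/-- The hypercube graph `Q_n`. -/
def hypercube (n : ℕ) : SimpleGraph (Fin n → Fin 2) where
  Adj u v := hammingDist u v = 1
  symm := ⟨fun u v h => Eq.trans (hammingDist_comm v u) h⟩
  loopless := ⟨fun u h => by simp only [hammingDist_self] at h; exact absurd h (by norm_num)⟩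

noncomputable instance (n : ℕ) : DecidableRel (hypercube n).Adj :=
  fun _ _ => Classical.dec _

/-- The Lee graph `G(n,q)`: the `n`-fold Cartesian product of the `q`-cycle. -/
def leeGraph (n q : ℕ) : SimpleGraph (Fin n → ZMod q) where
  Adj u v := u ≠ v ∧ ∃ i, (u i = v i + 1 ∨ v i = u i + 1) ∧ ∀ j, j ≠ i → u j = v j
  symm := ⟨by
    rintro u v ⟨hne, i, h, hj⟩
    exact ⟨hne.symm, i, h.symm, fun j hji => (hj j hji).symm⟩⟩
  loopless := ⟨fun u h => h.1 rfl⟩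

noncomputable instance (n q : ℕ) : DecidableRel (leeGraph n q).Adj :=
  fun _ _ => Classical.dec _

/-- The Lee distance on `(ℤ/qℤ)^n`. -/
def leeDist {n q : ℕ} (b c : Fin n → ZMod q) : ℕ :=
  ∑ i, min ((b i - c i).val) (q - (b i - c i).val)


open Matrix in
lemma dot_sum' {n m : ℕ} (u : Fin n → ℝ) (f : Fin m → Fin n → ℝ) :
    u ⬝ᵥ (∑ i, f i) = ∑ i, u ⬝ᵥ f i := by
  simp only [dotProduct, Finset.sum_apply, Finset.mul_sum]
  rw [Finset.sum_comm]

open Matrix in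
lemma quad_bound {n : ℕ} {A B : Matrix (Fin n) (Fin n) ℝ} (hA : A.IsHermitian)
    (p : ℝ → ℝ)
    (hB : ∀ (v : Fin n → ℝ) (μ : ℝ), A.mulVec v = μ • v → B.mulVec v = p μ • v)
    (hp0 : ∀ μ : ℝ, (∃ v : Fin n → ℝ, v ≠ 0 ∧ A.mulVec v = μ • v) → 0 ≤ p μ)
    {κ : ℝ} (hw : A.mulVec (fun _ => (1:ℝ)) = κ • (fun _ => (1:ℝ))) (hκ : 0 ≤ p κ)
    (x : Fin n → ℝ) :
    p κ * (∑ i, x i) ^ 2 ≤ n * (x ⬝ᵥ B.mulVec x) := by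
  classical
  set b := hA.eigenvectorBasis with hb
  set lam := hA.eigenvalues with hlam
  have hinner : ∀ (u v : EuclideanSpace ℝ (Fin n)),
      (inner ℝ u v : ℝ) = (WithLp.equiv 2 (Fin n → ℝ)) u ⬝ᵥ (WithLp.equiv 2 (Fin n → ℝ)) v := by
    intro u v
    rw [EuclideanSpace.inner_eq_star_dotProduct]
    simp [dotProduct, mul_comm]
  -- representation of any vector in the eigenbasis
  have hrep : ∀ y : Fin n → ℝ, ∑ i, ((⇑(b i) : Fin n → ℝ) ⬝ᵥ y) • (⇑(b i) : Fin n → ℝ) = y := by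
    intro y
    have h := b.sum_repr' ((WithLp.equiv 2 (Fin n → ℝ)).symm y)
    simp_rw [hinner, Equiv.apply_symm_apply] at h
    simpa [WithLp.ofLp_sum] using congrArg (WithLp.equiv 2 (Fin n → ℝ)) h
  have hbo : ∀ i j, (⇑(b i) : Fin n → ℝ) ⬝ᵥ (⇑(b j) : Fin n → ℝ) = if i = j then 1 else 0 := by
    intro i j
    have h := b.orthonormal
    rw [orthonormal_iff_ite] at h
    have h2 := h i j
    rwa [hinner (b i) (b j)] at h2
  have hAe : ∀ i, A.mulVec (⇑(b i)) = lam i • ⇑(b i) := fun i => hA.mulVec_eigenvectorBasis i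
  have hBe : ∀ i, B.mulVec (⇑(b i)) = p (lam i) • ⇑(b i) := fun i => hB _ _ (hAe i)
  have hplam : ∀ i, 0 ≤ p (lam i) := by
    intro i
    refine hp0 (lam i) ⟨⇑(b i), ?_, hAe i⟩
    intro h0
    exact b.orthonormal.ne_zero i (by ext j; exact congrFun h0 j)
  set w : Fin n → ℝ := fun _ => 1 with hwdef
  set c : Fin n → ℝ := fun i => (⇑(b i) : Fin n → ℝ) ⬝ᵥ x with hc
  set e : Fin n → ℝ := fun i => (⇑(b i) : Fin n → ℝ) ⬝ᵥ w with he
  have hsymm : Aᵀ = A := by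
    rw [← Matrix.conjTranspose_eq_transpose_of_trivial]; exact hA
  -- e i vanishes unless lam i = κ
  have helam : ∀ i, lam i ≠ κ → e i = 0 := by
    intro i hne
    have h1 : (⇑(b i) : Fin n → ℝ) ⬝ᵥ A.mulVec w = κ * e i := by
      rw [hw, dotProduct_smul]; simp [he]
    have h2 : (⇑(b i) : Fin n → ℝ) ⬝ᵥ A.mulVec w = lam i * e i := by
      rw [Matrix.dotProduct_mulVec, ← Matrix.mulVec_transpose, hsymm, hAe i,
        smul_dotProduct]
      simp [he]
    have := h1.symm.trans h2
    rcases mul_eq_mul_right_iff.mp this with h | h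
    · exact absurd h.symm hne
    · exact h
  -- expansions
  have hBx : B.mulVec x = ∑ i, (c i * p (lam i)) • (⇑(b i) : Fin n → ℝ) := by
    conv_lhs => rw [← hrep x]
    rw [show B.mulVec (∑ i, c i • (⇑(b i) : Fin n → ℝ)) =
        ∑ i, B.mulVec (c i • (⇑(b i) : Fin n → ℝ)) from map_sum B.mulVecLin _ _]
    refine Finset.sum_congr rfl fun i _ => ?_
    rw [Matrix.mulVec_smul, hBe i, smul_smul]
  have hxBx : x ⬝ᵥ B.mulVec x = ∑ i, c i ^ 2 * p (lam i) := by
    rw [hBx, dot_sum']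
    refine Finset.sum_congr rfl fun i _ => ?_
    rw [dotProduct_smul, dotProduct_comm]
    simp [hc]; ring
  have hdot : ∀ y z : Fin n → ℝ,
      y ⬝ᵥ z = ∑ i, ((⇑(b i) : Fin n → ℝ) ⬝ᵥ y) * ((⇑(b i) : Fin n → ℝ) ⬝ᵥ z) := by
    intro y z
    conv_lhs => rw [← hrep z]
    rw [dot_sum']
    refine Finset.sum_congr rfl fun i _ => ?_
    rw [dotProduct_smul, smul_eq_mul, dotProduct_comm y]
    exact mul_comm _ _
  have hxw : ∑ i, x i = ∑ i, e i * c i := by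
    have h0 : ∑ i, x i = w ⬝ᵥ x := by simp [hwdef, dotProduct]
    rw [h0, hdot w x]
  have hww : ∑ i, e i ^ 2 = (n : ℝ) := by
    have h0 : w ⬝ᵥ w = (n : ℝ) := by simp [hwdef, dotProduct]
    rw [← h0, hdot w w]
    exact Finset.sum_congr rfl fun i _ => by simp [he]; ring
  -- Cauchy-Schwarz over the κ-eigenspace indices
  set T := Finset.univ.filter (fun i => lam i = κ) with hT
  have h1 : ∑ i, e i * c i = ∑ i ∈ T, e i * c i := by
    rw [hT]
    exact (Finset.sum_filter_of_ne (fun i _ hne => by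
      by_contra hlk
      exact hne (by rw [helam i hlk, zero_mul]))).symm
  have hCS : (∑ i ∈ T, e i * c i) ^ 2 ≤ (∑ i ∈ T, e i ^ 2) * (∑ i ∈ T, c i ^ 2) :=
    Finset.sum_mul_sq_le_sq_mul_sq T e c
  have hTe : ∑ i ∈ T, e i ^ 2 ≤ (n : ℝ) := by
    rw [← hww]
    exact Finset.sum_le_sum_of_subset_of_nonneg (Finset.filter_subset _ _)
      (fun i _ _ => sq_nonneg _)
  have hTc : 0 ≤ ∑ i ∈ T, c i ^ 2 := Finset.sum_nonneg fun i _ => sq_nonneg _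
  have hmain : p κ * (∑ i ∈ T, c i ^ 2) ≤ ∑ i, c i ^ 2 * p (lam i) := by
    rw [Finset.mul_sum]
    calc ∑ i ∈ T, p κ * c i ^ 2 = ∑ i ∈ T, c i ^ 2 * p (lam i) := by
          refine Finset.sum_congr rfl fun i hi => ?_
          rw [(Finset.mem_filter.mp hi).2, mul_comm]
      _ ≤ ∑ i, c i ^ 2 * p (lam i) :=
          Finset.sum_le_sum_of_subset_of_nonneg (Finset.filter_subset _ _)
            (fun i _ _ => mul_nonneg (sq_nonneg _) (hplam i))
  calc p κ * (∑ i, x i) ^ 2 = p κ * (∑ i ∈ T, e i * c i) ^ 2 := by rw [hxw, h1]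
    _ ≤ p κ * ((∑ i ∈ T, e i ^ 2) * (∑ i ∈ T, c i ^ 2)) :=
        mul_le_mul_of_nonneg_left hCS hκ
    _ ≤ p κ * ((n : ℝ) * (∑ i ∈ T, c i ^ 2)) :=
        mul_le_mul_of_nonneg_left (mul_le_mul_of_nonneg_right hTe hTc) hκ
    _ = (n : ℝ) * (p κ * (∑ i ∈ T, c i ^ 2)) := by ring
    _ ≤ (n : ℝ) * (∑ i, c i ^ 2 * p (lam i)) :=
        mul_le_mul_of_nonneg_left hmain (Nat.cast_nonneg n)
    _ = n * (x ⬝ᵥ B.mulVec x) := by rw [hxBx]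

/-- optimal Ratio-type bound for `χ₃` of regular graphs.
`G` is `k`-regular on `n` vertices with distinct eigenvalues `k = θ 0 > ⋯ > θ d`, `d ≥ 3`,
`Δ₃ = max_u (A³)_{uu}`, and `θ s` is the largest eigenvalue with
`θ s ≤ −(θ 0² + θ 0 θ d − Δ₃)/(θ 0 (θ d + 1))`. Then
`χ₃(G) ≥ n / ⌊n (Δ₃ − θ 0(θ s + θ (s−1) + θ d) − θ s θ (s−1) θ d) /
((θ 0 − θ s)(θ 0 − θ (s−1))(θ 0 − θ d))⌋`. -/
theorem stmt3 {n k : ℕ} (G : SimpleGraph (Fin n)) [DecidableRel G.Adj]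
    (hreg : G.IsRegularOfDegree k)
    (d : ℕ) (hd : 3 ≤ d) (θ : Fin (d + 1) → ℝ) (hθ : StrictAnti θ) (hθ0 : θ 0 = (k : ℝ))
    (hspec : {x : ℝ | IsAdjEigenvalue G x} = Set.range θ)
    (Δ3 : ℝ)
    (hΔ3 : IsGreatest (Set.range fun u : Fin n => (SimpleGraph.adjMatrix ℝ G ^ 3) u u) Δ3)
    (s : Fin (d + 1)) (hs : 0 < s.1)
    (hsmax : IsGreatest {x : ℝ | IsAdjEigenvalue G x ∧
      x ≤ -((θ 0) ^ 2 + θ 0 * θ (Fin.last d) - Δ3) / (θ 0 * (θ (Fin.last d) + 1))} (θ s)) :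
    (n : ℝ) / (⌊(n : ℝ) *
          (Δ3 - θ 0 * (θ s + θ ⟨s.1 - 1, (Nat.sub_le s.1 1).trans_lt s.isLt⟩ + θ (Fin.last d))
            - θ s * θ ⟨s.1 - 1, (Nat.sub_le s.1 1).trans_lt s.isLt⟩ * θ (Fin.last d)) /
          ((θ 0 - θ s) * (θ 0 - θ ⟨s.1 - 1, (Nat.sub_le s.1 1).trans_lt s.isLt⟩) *
            (θ 0 - θ (Fin.last d)))⌋ : ℤ)
      ≤ ((distChromaticNumber G 3).toNat : ℝ) := by
  classical
  open Matrix in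
  set a := θ s with ha
  set bb := θ (⟨s.1 - 1, (Nat.sub_le s.1 1).trans_lt s.isLt⟩ : Fin (d + 1)) with hbb
  set cc := θ (Fin.last d) with hcc
  set N := Δ3 - θ 0 * (a + bb + cc) - a * bb * cc with hN
  set D := (θ 0 - a) * (θ 0 - bb) * (θ 0 - cc) with hD
  -- trivial case n = 0
  rcases Nat.eq_zero_or_pos n with hn0 | hn
  · have h0 : ((n : ℕ) : ℝ) = 0 := by rw [hn0]; norm_num
    rw [h0, zero_div]
    positivity
  -- degenerate case s = 1 : the denominator is zero
  by_cases hs1 : s.1 = 1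
  · have hbb0 : bb = θ 0 := by
      rw [hbb]; congr 1
      apply Fin.ext; simp [hs1]
    have hD0 : D = 0 := by rw [hD, hbb0, sub_self]; ring
    rw [hD0, div_zero, Int.floor_zero, Int.cast_zero, div_zero]
    positivity
  -- main case
  have hs2 : 1 < s.1 := lt_of_le_of_ne hs fun h => hs1 h.symm
  have hs'pos : 0 < s.1 - 1 := by omega
  have hantit := hθ.antitone
  have hlt_a : a < θ 0 := by
    rw [ha]; exact hθ (by rw [Fin.lt_def]; simpa using hs)
  have hlt_b : bb < θ 0 := by
    rw [hbb]; exact hθ (by rw [Fin.lt_def]; simpa using hs'pos)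
  have hlt_c : cc < θ 0 := by
    rw [hcc]; exact hθ (by rw [Fin.lt_def]; simp; omega)
  have hDpos : 0 < D := by
    rw [hD]; have := sub_pos.mpr hlt_a; have := sub_pos.mpr hlt_b
    have := sub_pos.mpr hlt_c; positivity
  have hba : a < bb := by
    rw [ha, hbb]; exact hθ (by rw [Fin.lt_def]; show s.1 - 1 < s.1; omega)
  set A := G.adjMatrix ℝ with hAdef
  have hA : A.IsHermitian :=
    (Matrix.conjTranspose_eq_transpose_of_trivial A).trans (SimpleGraph.transpose_adjMatrix _)
  set σ1 := a + bb + cc with hσ1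
  set σ2 := a * bb + a * cc + bb * cc with hσ2
  set σ3 := a * bb * cc with hσ3
  set B := A ^ 3 - σ1 • A ^ 2 + σ2 • A - σ3 • (1 : Matrix (Fin n) (Fin n) ℝ) with hBdef
  set p : ℝ → ℝ := fun μ => (μ - a) * (μ - bb) * (μ - cc) with hp
  have hB : ∀ (v : Fin n → ℝ) (μ : ℝ), A.mulVec v = μ • v → B.mulVec v = p μ • v := by
    intro v μ hv
    have h2 : (A ^ 2).mulVec v = (μ ^ 2) • v := by
      rw [pow_two, ← Matrix.mulVec_mulVec, hv, Matrix.mulVec_smul, hv, smul_smul, sq]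
    have h3 : (A ^ 3).mulVec v = (μ ^ 3) • v := by
      rw [pow_succ, ← Matrix.mulVec_mulVec, hv, Matrix.mulVec_smul, h2, smul_smul]
      norm_num; ring_nf
    rw [hBdef, Matrix.sub_mulVec, Matrix.add_mulVec, Matrix.sub_mulVec,
      Matrix.smul_mulVec, Matrix.smul_mulVec, Matrix.smul_mulVec,
      Matrix.one_mulVec, h3, h2, hv]
    funext u
    simp only [hp, Pi.smul_apply, Pi.add_apply, Pi.sub_apply, smul_eq_mul]
    ring
  have hp0 : ∀ μ : ℝ, (∃ v : Fin n → ℝ, v ≠ 0 ∧ A.mulVec v = μ • v) → 0 ≤ p μ := by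
    intro μ hv
    have hμ : μ ∈ {x : ℝ | IsAdjEigenvalue G x} := hv
    rw [hspec] at hμ
    obtain ⟨j, rfl⟩ := hμ
    rcases eq_or_ne j 0 with rfl | hj0
    · show (0:ℝ) ≤ (θ 0 - a) * (θ 0 - bb) * (θ 0 - cc)
      rw [← hD]; exact hDpos.le
    · show (0:ℝ) ≤ (θ j - a) * (θ j - bb) * (θ j - cc)
      rcases le_or_gt s j with hsj | hjs
      · have h1 : θ j - a ≤ 0 := sub_nonpos.mpr (ha ▸ hantit hsj)
        have h2 : θ j - bb ≤ 0 := sub_nonpos.mpr ((ha ▸ hantit hsj).trans hba.le)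
        have h3 : 0 ≤ θ j - cc := sub_nonneg.mpr (hcc ▸ hantit (Fin.le_last j))
        have h12 : 0 ≤ (θ j - a) * (θ j - bb) := by nlinarith [h1, h2]
        exact mul_nonneg h12 h3
      · have hjs' : j ≤ (⟨s.1 - 1, (Nat.sub_le s.1 1).trans_lt s.isLt⟩ : Fin (d + 1)) := by
          rw [Fin.le_def]; simp
          have := (Fin.lt_def.mp hjs); omega
        have h1 : 0 ≤ θ j - bb := sub_nonneg.mpr (hbb ▸ hantit hjs')
        have h2 : 0 ≤ θ j - a := sub_nonneg.mpr ((hbb ▸ hantit hjs').trans' hba.le)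
        have h3 : 0 ≤ θ j - cc := sub_nonneg.mpr (hcc ▸ hantit (Fin.le_last j))
        exact mul_nonneg (mul_nonneg h2 h1) h3
  have hw : A.mulVec (fun _ => (1:ℝ)) = ((k:ℝ)) • (fun _ => (1:ℝ)) := by
    funext u
    rw [hAdef, SimpleGraph.adjMatrix_mulVec_apply]
    simp only [Pi.smul_apply, smul_eq_mul, mul_one, Finset.sum_const, nsmul_eq_mul, mul_one]
    exact_mod_cast congrArg Nat.cast (hreg u)
  have hpk : p ((k:ℝ)) = D := by simp only [hp, hD, hθ0]
  -- the key quadratic bound for independent sets of the cube graph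
  have key' : ∀ S : Finset (Fin n), (∀ u ∈ S, ∀ v ∈ S, u ≠ v → ¬ (powerGraph G 3).Adj u v) →
      D * ((S.card : ℝ)) ^ 2 ≤ (n : ℝ) * ((S.card : ℝ) * N) := by
    intro S hS
    set x : Fin n → ℝ := fun u => if u ∈ S then 1 else 0 with hx
    have hq := quad_bound hA p hB hp0 hw (by rw [hpk]; exact hDpos.le) x
    rw [hpk] at hq
    have hxs : ∑ i, x i = (S.card : ℝ) := by simp [hx]
    rw [hxs] at hq
    refine hq.trans ?_
    have hBod : ∀ u ∈ S, ∀ v ∈ S, u ≠ v → B u v = 0 := by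
      intro u hu v hv huv
      have hnadj := hS u hu v hv huv
      have hwm : ∀ m : ℕ, m ≤ 3 → (A ^ m) u v = 0 := by
        intro m hm
        rw [hAdef, SimpleGraph.adjMatrix_pow_apply_eq_card_walk]
        haveI : IsEmpty {q : G.Walk u v // q.length = m} :=
          ⟨fun ⟨wk, hlen⟩ => hnadj (show u ≠ v ∧ G.Reachable u v ∧ G.dist u v ≤ 3 from ⟨huv, ⟨wk⟩,
            le_trans (SimpleGraph.dist_le wk) (by rw [hlen]; exact hm)⟩)⟩
        simp only [Set.coe_setOf]
        rw [Fintype.card_eq_zero]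
        norm_num
      have h1 : A u v = 0 := by have := hwm 1 (by norm_num); rwa [pow_one] at this
      rw [hBdef]
      simp only [Matrix.sub_apply, Matrix.add_apply, Matrix.smul_apply, smul_eq_mul]
      rw [hwm 3 le_rfl, hwm 2 (by norm_num), h1, Matrix.one_apply_ne huv]
      ring
    have hBd : ∀ u, B u u ≤ N := by
      intro u
      have h2 : (A ^ 2) u u = (k : ℝ) := by
        rw [hAdef, pow_two, SimpleGraph.adjMatrix_mul_self_apply_self]
        exact_mod_cast congrArg Nat.cast (hreg u)
      have h1 : A u u = 0 := by rw [hAdef]; simp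
      have h3 : (A ^ 3) u u ≤ Δ3 := hΔ3.2 ⟨u, rfl⟩
      rw [hBdef]
      simp only [Matrix.sub_apply, Matrix.add_apply, Matrix.smul_apply, smul_eq_mul,
        Matrix.one_apply_eq, mul_one]
      rw [h1, h2, hN, hσ1, hσ3, hθ0]
      nlinarith [h3]
    have e1 : dotProduct x (B.mulVec x) = ∑ u ∈ S, ∑ v ∈ S, B u v := by
      simp only [dotProduct, Matrix.mulVec, hx, ite_mul, one_mul, zero_mul,
        mul_ite, mul_one, mul_zero]
      simp_rw [Finset.sum_ite_mem, Finset.univ_inter]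
    have e2 : ∑ u ∈ S, ∑ v ∈ S, B u v = ∑ u ∈ S, B u u := by
      refine Finset.sum_congr rfl fun u hu => ?_
      rw [← Finset.add_sum_erase S _ hu]
      have hz : ∑ v ∈ S.erase u, B u v = 0 :=
        Finset.sum_eq_zero fun v hv =>
          hBod u hu v (Finset.mem_of_mem_erase hv) (Finset.ne_of_mem_erase hv).symm
      rw [hz, add_zero]
    have e3 : ∑ u ∈ S, B u u ≤ (S.card : ℝ) * N := by
      calc ∑ u ∈ S, B u u ≤ ∑ _u ∈ S, N := Finset.sum_le_sum fun u _ => hBd u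
        _ = (S.card : ℝ) * N := by rw [Finset.sum_const, nsmul_eq_mul]
    have : dotProduct x (B.mulVec x) ≤ (S.card : ℝ) * N := by rw [e1, e2]; exact e3
    exact mul_le_mul_of_nonneg_left this (Nat.cast_nonneg n)
  -- positivity of N
  have hsing : ∀ u0 : Fin n, ∀ u ∈ ({u0} : Finset (Fin n)), ∀ v ∈ ({u0} : Finset (Fin n)),
      u ≠ v → ¬ (powerGraph G 3).Adj u v := by
    intro u0 u hu v hv huv
    rw [Finset.mem_singleton] at hu hv
    exact absurd (hu.trans hv.symm) huv
  have hDN : D ≤ (n : ℝ) * N := by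
    have h := key' {⟨0, hn⟩} (hsing _)
    simpa using h
  have hn' : (0:ℝ) < (n : ℝ) := by exact_mod_cast hn
  have hN0 : 0 < N := by nlinarith [hDpos, hDN, hn']
  -- the floor bound for independent sets
  have key : ∀ S : Finset (Fin n), (∀ u ∈ S, ∀ v ∈ S, u ≠ v → ¬ (powerGraph G 3).Adj u v) →
      (S.card : ℤ) ≤ ⌊(n : ℝ) * N / D⌋ := by
    intro S hS
    rw [Int.le_floor, Int.cast_natCast]
    rcases Nat.eq_zero_or_pos S.card with h0 | hpos
    · rw [h0, Nat.cast_zero]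
      exact div_nonneg (mul_nonneg hn'.le hN0.le) hDpos.le
    · have h := key' S hS
      have hc : (0:ℝ) < (S.card : ℝ) := by exact_mod_cast hpos
      have h2 : ((S.card:ℝ) * D) * (S.card:ℝ) ≤ ((n:ℝ) * N) * (S.card:ℝ) := by
        calc ((S.card:ℝ) * D) * (S.card:ℝ) = D * (S.card:ℝ) ^ 2 := by ring
          _ ≤ (n:ℝ) * ((S.card:ℝ) * N) := h
          _ = ((n:ℝ) * N) * (S.card:ℝ) := by ring
      rw [le_div_iff₀ hDpos]
      exact le_of_mul_le_mul_right h2 hc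
  -- chromatic number side
  obtain ⟨C⟩ := SimpleGraph.colorable_chromaticNumber_of_fintype (powerGraph G 3)
  set m := ((powerGraph G 3).chromaticNumber).toNat with hm
  set F := (⌊(n : ℝ) * N / D⌋).toNat with hF
  have hone : (1 : ℤ) ≤ ⌊(n : ℝ) * N / D⌋ := by
    have := key {⟨0, hn⟩} (hsing _)
    simpa using this
  have hFpos : 0 < F := by omega
  have hfib : ∀ i : Fin m, (Finset.univ.filter fun u => C u = i).card ≤ F := by
    intro i
    have hind : ∀ u ∈ (Finset.univ.filter fun u => C u = i),
        ∀ v ∈ (Finset.univ.filter fun u => C u = i), u ≠ v → ¬ (powerGraph G 3).Adj u v := by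
      intro u hu v hv huv hadj
      have h1 := (Finset.mem_filter.mp hu).2
      have h2 := (Finset.mem_filter.mp hv).2
      exact C.valid hadj (h1.trans h2.symm)
    have := key _ hind
    omega
  have hcount : n ≤ m * F := by
    have h1 : (Finset.univ : Finset (Fin n)).card =
        ∑ i : Fin m, (Finset.univ.filter fun u => C u = i).card :=
      Finset.card_eq_sum_card_fiberwise fun u _ => Finset.mem_univ (C u)
    have h2 : ∑ i : Fin m, (Finset.univ.filter fun u => C u = i).card ≤
        Finset.univ.card • F :=
      Finset.sum_le_card_nsmul _ _ _ fun i _ => hfib i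
    have h3 : (Finset.univ : Finset (Fin n)).card = n := by
      rw [Finset.card_univ, Fintype.card_fin]
    have h4 : (Finset.univ : Finset (Fin m)).card = m := by
      rw [Finset.card_univ, Fintype.card_fin]
    rw [h3] at h1
    rw [h4, smul_eq_mul] at h2
    omega
  -- conclusion
  have hfz : (F : ℤ) = ⌊(n : ℝ) * N / D⌋ := by
    rw [hF]; exact Int.toNat_of_nonneg (by omega)
  have hfloor : ((⌊(n : ℝ) * N / D⌋ : ℤ) : ℝ) = (F : ℝ) := by
    rw [← hfz]; norm_num
  have hgoal : ((distChromaticNumber G 3).toNat : ℝ) = (m : ℝ) := rfl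
  rw [hgoal, hfloor, div_le_iff₀ (by exact_mod_cast hFpos)]
  exact_mod_cast hcount
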